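/- Let a, q ∈ L^∞([0,T]) with a differentiable, a' ∈ L^∞([0,T]), and inf_{t∈[0,T]} a(t) = a₀ > 0. For fixed λ ≥ 0, let û : [0,T] → ℂ solve the ODE ∂_t²û(t) + a(t)λ û(t) + q(t)û(t) = f̂(t) with data û(0) = û₀, ∂_t û(0) = û₁, where f̂ ∈ L²([0,T]). Then with ⟨λ⟩ = (1+λ)^{1/2}, ⟨λ⟩²|û(t)|² + |∂_t û(t)|² ≤ C_T ( ⟨λ⟩²|û₀|² + |û₁|² + ∫₀ᵀ |f̂(τ)|² dτ ) for all t ∈ [0,T], where C_T = c₀⁻¹(1+‖a‖_{L^∞}) exp( c₀⁻¹(1 + ‖a'‖_{L^∞} + ‖q‖_{L^∞} + 2‖a‖_{L^∞}) T ) and c₀ = min{a₀, 1}; in particular the constant C_T is independent of λ. -/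

import Mathlib

/-!
The symmetriser energy `E = a(t)⟨λ⟩²|û|² + |∂ₜû|²` is squeezed between `c₀` and `1 + ‖a‖_∞`
times `⟨λ⟩²|û|² + |∂ₜû|²`. Differentiating `E` and substituting the equation, the two terms
`± 2a(t)λ Re(û ∂ₜū)` cancel, so `E' ≤ κ₁ E + |f̂|²` with `κ₁` independent of `λ`; Gronwall's
lemma, applied to `e^{-κ₁ t} E`, then gives the estimate.
-/

open Set intervalIntegral Real

theorem le_exp_mul_add_integral_of_hasDerivAt_le {f f' g : ℝ → ℝ} {κ t : ℝ} (hκ : 0 ≤ κ)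
    (ht : 0 ≤ t) (hf : ∀ s ∈ Icc 0 t, HasDerivAt f (f' s) s)
    (hf' : ∀ s ∈ Ioo 0 t, f' s ≤ κ * f s + g s)
    (hg : IntervalIntegrable g MeasureTheory.volume 0 t) (hg₀ : ∀ s ∈ Ioo 0 t, 0 ≤ g s) :
    f t ≤ exp (κ * t) * (f 0 + ∫ s in 0..t, g s) := by
  have hdamped : ∀ s ∈ Icc 0 t, HasDerivAt (fun s => exp (-κ * s) * f s)
      (exp (-κ * s) * (f' s - κ * f s)) s := fun s hs => by
    have hexp : HasDerivAt (fun s => exp (-κ * s)) (exp (-κ * s) * -κ) s := by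
      simpa using ((hasDerivAt_id s).const_mul (-κ)).exp
    exact (hexp.mul (hf s hs)).congr_deriv (by ring)
  have hftc : exp (-κ * t) * f t - exp (-κ * 0) * f 0 ≤ ∫ s in 0..t, g s := by
    refine sub_le_integral_of_hasDeriv_right_of_le ht
      (fun s hs => (hdamped s hs).continuousAt.continuousWithinAt)
      (fun s hs => (hdamped s (Ioo_subset_Icc_self hs)).hasDerivWithinAt)
      ((intervalIntegrable_iff_integrableOn_Icc_of_le ht).1 hg) fun s hs => ?_
    have hdecay : exp (-κ * s) ≤ 1 := exp_le_one_iff.2 (by nlinarith [hs.1])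
    calc exp (-κ * s) * (f' s - κ * f s) ≤ exp (-κ * s) * g s := by
          gcongr; linarith [hf' s hs]
      _ ≤ g s := mul_le_of_le_one_left (hg₀ s hs) hdecay
  have hrescale : f t = exp (κ * t) * (exp (-κ * t) * f t) := by
    rw [← mul_assoc, ← exp_add]; simp
  rw [hrescale]
  gcongr
  simp only [mul_zero, exp_zero, one_mul] at hftc
  linarith

section ModeEnergy

variable {F : Type*} [NormedAddCommGroup F]

def modeEnergy (A lam : ℝ) (x v : F) : ℝ := A * (1 + lam) * ‖x‖ ^ 2 + ‖v‖ ^ 2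

theorem mul_le_modeEnergy {A lam c : ℝ} (x v : F) (hlam : 0 ≤ lam) (hcA : c ≤ A) (hc1 : c ≤ 1) :
    c * ((1 + lam) * ‖x‖ ^ 2 + ‖v‖ ^ 2) ≤ modeEnergy A lam x v := by
  unfold modeEnergy
  have hx : c * ((1 + lam) * ‖x‖ ^ 2) ≤ A * ((1 + lam) * ‖x‖ ^ 2) := by gcongr
  have hv : c * ‖v‖ ^ 2 ≤ ‖v‖ ^ 2 := mul_le_of_le_one_left (sq_nonneg _) hc1
  linarith

theorem modeEnergy_le {A lam K : ℝ} (x v : F) (hlam : 0 ≤ lam) (hAK : A ≤ K) (hK : 0 ≤ K) :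
    modeEnergy A lam x v ≤ (1 + K) * ((1 + lam) * ‖x‖ ^ 2 + ‖v‖ ^ 2) := by
  unfold modeEnergy
  have hx : A * ((1 + lam) * ‖x‖ ^ 2) ≤ K * ((1 + lam) * ‖x‖ ^ 2) := by gcongr
  nlinarith [sq_nonneg ‖x‖, sq_nonneg ‖v‖]

variable [InnerProductSpace ℝ F]

theorem hasDerivAt_modeEnergy {a : ℝ → ℝ} {u v : ℝ → F} {a' t lam : ℝ} {u' v' : F}
    (ha : HasDerivAt a a' t) (hu : HasDerivAt u u' t) (hv : HasDerivAt v v' t) :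
    HasDerivAt (fun s => modeEnergy (a s) lam (u s) (v s))
      (a' * (1 + lam) * ‖u t‖ ^ 2 + 2 * a t * (1 + lam) * inner ℝ (u t) u'
        + 2 * inner ℝ (v t) v') t := by
  have h := ((ha.mul_const (1 + lam)).mul hu.norm_sq).add hv.norm_sq
  exact h.congr_deriv (by ring)

theorem modeEnergy_rate_le {A A' Q lam c Ka Ka' Kq : ℝ} {x v v' w : F}
    (hode : v' + (A * lam) • x + Q • x = w) (hlam : 0 ≤ lam) (hc : 0 < c) (hc1 : c ≤ 1)
    (hcA : c ≤ A) (hAK : A ≤ Ka) (hA' : |A'| ≤ Ka') (hQ : |Q| ≤ Kq) :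
    A' * (1 + lam) * ‖x‖ ^ 2 + 2 * A * (1 + lam) * inner ℝ x v + 2 * inner ℝ v v' ≤
      c⁻¹ * (1 + Ka' + Kq + 2 * Ka) * modeEnergy A lam x v + ‖w‖ ^ 2 := by
  set N := (1 + lam) * ‖x‖ ^ 2 + ‖v‖ ^ 2
  have hv' : v' = w - (A * lam) • x - Q • x := by rw [← hode]; abel
  have hcancel : A' * (1 + lam) * ‖x‖ ^ 2 + 2 * A * (1 + lam) * inner ℝ x v + 2 * inner ℝ v v'
      = A' * (1 + lam) * ‖x‖ ^ 2 + 2 * (A - Q) * inner ℝ x v + 2 * inner ℝ v w := by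
    rw [hv', inner_sub_right, inner_sub_right, real_inner_smul_right, real_inner_smul_right,
      real_inner_comm x v]
    ring
  have hxX : ‖x‖ ^ 2 ≤ (1 + lam) * ‖x‖ ^ 2 := le_mul_of_one_le_left (sq_nonneg _) (by linarith)
  have hxv : 2 * |inner ℝ x v| ≤ N := by
    nlinarith [abs_real_inner_le_norm x v, two_mul_le_add_sq ‖x‖ ‖v‖]
  have hvw : 2 * inner ℝ v w ≤ N + ‖w‖ ^ 2 := by
    nlinarith [real_inner_le_norm v w, two_mul_le_add_sq ‖v‖ ‖w‖, sq_nonneg ‖x‖]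
  have hdiss : A' * (1 + lam) * ‖x‖ ^ 2 ≤ Ka' * N := by
    have : A' * ((1 + lam) * ‖x‖ ^ 2) ≤ Ka' * ((1 + lam) * ‖x‖ ^ 2) := by
      gcongr; exact (le_abs_self _).trans hA'
    nlinarith [sq_nonneg ‖v‖, (abs_nonneg A').trans hA']
  have hKa : 0 < Ka := hc.trans_le (hcA.trans hAK)
  have hN0 : 0 ≤ N := by positivity
  have hAQ : |A - Q| ≤ Ka + Kq :=
    (abs_sub _ _).trans (add_le_add ((abs_of_pos (hc.trans_le hcA)).trans_le hAK) hQ)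
  have hcross : 2 * (A - Q) * inner ℝ x v ≤ (Ka + Kq) * N :=
    calc 2 * (A - Q) * inner ℝ x v ≤ |2 * (A - Q) * inner ℝ x v| := le_abs_self _
      _ = |A - Q| * (2 * |inner ℝ x v|) := by rw [abs_mul, abs_mul, abs_two]; ring
      _ ≤ (Ka + Kq) * N := by gcongr; exact (abs_nonneg _).trans hAQ
  have hN : c * N ≤ modeEnergy A lam x v := mul_le_modeEnergy x v hlam hcA hc1
  have hK : 0 ≤ 1 + Ka' + Kq + 2 * Ka := by
    have := (abs_nonneg A').trans hA'; have := (abs_nonneg Q).trans hQ; linarith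
  calc _ ≤ (1 + Ka' + Kq + 2 * Ka) * N + ‖w‖ ^ 2 := by
        rw [hcancel]; nlinarith [mul_nonneg hKa.le hN0]
    _ = c⁻¹ * (1 + Ka' + Kq + 2 * Ka) * (c * N) + ‖w‖ ^ 2 := by field_simp
    _ ≤ _ := by gcongr

theorem modeEnergy_le_exp_mul_add_integral {a a' q : ℝ → ℝ} {u u' u'' f : ℝ → F}
    {lam c Ka Ka' Kq T t : ℝ} (hlam : 0 ≤ lam) (hc : 0 < c) (hc1 : c ≤ 1)
    (hca : ∀ s ∈ Icc 0 T, c ≤ a s) (haK : ∀ s ∈ Icc 0 T, a s ≤ Ka)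
    (haK' : ∀ s ∈ Icc 0 T, |a' s| ≤ Ka') (hqK : ∀ s ∈ Icc 0 T, |q s| ≤ Kq)
    (ha : ∀ s ∈ Icc 0 T, HasDerivAt a (a' s) s) (hu : ∀ s ∈ Icc 0 T, HasDerivAt u (u' s) s)
    (hu' : ∀ s ∈ Icc 0 T, HasDerivAt u' (u'' s) s)
    (hf : IntervalIntegrable (fun s => ‖f s‖ ^ 2) MeasureTheory.volume 0 T)
    (hode : ∀ s ∈ Icc 0 T, u'' s + (a s * lam) • u s + q s • u s = f s) (ht : t ∈ Icc 0 T) :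
    modeEnergy (a t) lam (u t) (u' t) ≤ exp (c⁻¹ * (1 + Ka' + Kq + 2 * Ka) * T) *
      (modeEnergy (a 0) lam (u 0) (u' 0) + ∫ s in 0..T, ‖f s‖ ^ 2) := by
  have hT : 0 ≤ T := ht.1.trans ht.2
  have h0 : (0 : ℝ) ∈ Icc 0 T := ⟨le_rfl, hT⟩
  have hIcc : Icc 0 t ⊆ Icc 0 T := Icc_subset_Icc_right ht.2
  have hκ : 0 ≤ c⁻¹ * (1 + Ka' + Kq + 2 * Ka) := mul_nonneg (inv_nonneg.2 hc.le) (by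
    linarith [(abs_nonneg _).trans (haK' 0 h0), (abs_nonneg _).trans (hqK 0 h0),
      hc.trans_le ((hca 0 h0).trans (haK 0 h0))])
  have hgron := le_exp_mul_add_integral_of_hasDerivAt_le hκ ht.1
    (fun s hs => hasDerivAt_modeEnergy (lam := lam) (ha s (hIcc hs)) (hu s (hIcc hs))
      (hu' s (hIcc hs)))
    (fun s hs => have hs' := hIcc (Ioo_subset_Icc_self hs)
      modeEnergy_rate_le (hode s hs') hlam hc hc1 (hca s hs') (haK s hs') (haK' s hs') (hqK s hs'))
    (hf.mono_set (by rwa [uIcc_of_le ht.1, uIcc_of_le hT])) (fun _ _ => by positivity)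
  have hE₀ : 0 ≤ modeEnergy (a 0) lam (u 0) (u' 0) :=
    (mul_nonneg hc.le (by positivity)).trans (mul_le_modeEnergy _ _ hlam (hca 0 h0) hc1)
  refine hgron.trans (mul_le_mul (exp_le_exp.2 (by gcongr; exact ht.2)) ?_
    (add_nonneg hE₀ (integral_nonneg ht.1 fun s _ => by positivity)) (exp_pos _).le)
  gcongr
  exact integral_mono_interval le_rfl ht.1 ht.2 (.of_forall fun _ => by positivity) hf

end ModeEnergy

theorem stmt19_general (T : ℝ) (a a' q : ℝ → ℝ)
    (Ka Ka' Kq a₀ : ℝ) (ha₀ : 0 < a₀)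
    (hainf : ∀ t ∈ Icc (0 : ℝ) T, a₀ ≤ a t)
    (haK : ∀ t ∈ Icc (0 : ℝ) T, |a t| ≤ Ka)
    (haK' : ∀ t ∈ Icc (0 : ℝ) T, |a' t| ≤ Ka')
    (hqK : ∀ t ∈ Icc (0 : ℝ) T, |q t| ≤ Kq)
    (hader : ∀ t ∈ Icc (0 : ℝ) T, HasDerivAt a (a' t) t)
    (lam : ℝ) (hlam : 0 ≤ lam)
    (u u' u'' fhat : ℝ → ℂ)
    (hu' : ∀ t ∈ Icc (0 : ℝ) T, HasDerivAt u (u' t) t)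
    (hu'' : ∀ t ∈ Icc (0 : ℝ) T, HasDerivAt u' (u'' t) t)
    (hf : IntervalIntegrable (fun τ => ‖fhat τ‖ ^ 2) MeasureTheory.volume 0 T)
    (hode : ∀ t ∈ Icc (0 : ℝ) T,
      u'' t + ((a t * lam : ℝ) : ℂ) * u t + ((q t : ℝ) : ℂ) * u t = fhat t) :
    ∀ t ∈ Icc (0 : ℝ) T,
      (1 + lam) * ‖u t‖ ^ 2 + ‖u' t‖ ^ 2 ≤
        ((min a₀ 1)⁻¹ * (1 + Ka) *
            Real.exp ((min a₀ 1)⁻¹ * (1 + Ka' + Kq + 2 * Ka) * T)) *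
          ((1 + lam) * ‖u 0‖ ^ 2 + ‖u' 0‖ ^ 2 +
            ∫ τ in (0 : ℝ)..T, ‖fhat τ‖ ^ 2) := by
  intro t ht
  have h0 : (0 : ℝ) ∈ Icc 0 T := ⟨le_rfl, ht.1.trans ht.2⟩
  have hc : 0 < min a₀ 1 := lt_min ha₀ one_pos
  have hca : ∀ s ∈ Icc 0 T, min a₀ 1 ≤ a s := fun s hs => (min_le_left _ _).trans (hainf s hs)
  have haKa : ∀ s ∈ Icc 0 T, a s ≤ Ka := fun s hs => (le_abs_self _).trans (haK s hs)
  have hKa : 0 ≤ Ka := ha₀.le.trans ((hainf 0 h0).trans (haKa 0 h0))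
  have hI : 0 ≤ ∫ τ in (0 : ℝ)..T, ‖fhat τ‖ ^ 2 :=
    integral_nonneg (ht.1.trans ht.2) fun _ _ => by positivity
  have hE := modeEnergy_le_exp_mul_add_integral hlam hc (min_le_right _ _) hca haKa haK' hqK
    hader hu' hu'' hf (fun s hs => by simpa only [Complex.real_smul] using hode s hs) ht
  have hE₀ := modeEnergy_le (u 0) (u' 0) hlam (haKa 0 h0) hKa
  calc (1 + lam) * ‖u t‖ ^ 2 + ‖u' t‖ ^ 2
      ≤ (min a₀ 1)⁻¹ * modeEnergy (a t) lam (u t) (u' t) := by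
        rw [le_inv_mul_iff₀ hc]
        exact mul_le_modeEnergy (u t) (u' t) hlam (hca t ht) (min_le_right _ _)
    _ ≤ (min a₀ 1)⁻¹ * (exp ((min a₀ 1)⁻¹ * (1 + Ka' + Kq + 2 * Ka) * T) *
          ((1 + Ka) * ((1 + lam) * ‖u 0‖ ^ 2 + ‖u' 0‖ ^ 2 + ∫ τ in (0 : ℝ)..T, ‖fhat τ‖ ^ 2))) := by
        gcongr
        exact hE.trans (by gcongr; nlinarith)
    _ = _ := by ring

/-- Mode-wise energy estimate for
`û'' + a(t)λ û + q(t)û = f̂` on `[0,T]` with `a` differentiable, `a, a', q` bounded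
(by `Ka, Ka', Kq`, their `L^∞` norms), `a ≥ a₀ > 0` and `λ ≥ 0`:
`⟨λ⟩²|û(t)|² + |û'(t)|² ≤ C_T(⟨λ⟩²|û(0)|² + |û'(0)|² + ∫₀ᵀ|f̂|²)` with
`C_T = c₀⁻¹(1+Ka)·exp(c₀⁻¹(1+Ka'+Kq+2Ka)T)`, `c₀ = min{a₀,1}`, independent of `λ`. -/
theorem stmt19 (T : ℝ) (hT : 0 ≤ T) (a a' q : ℝ → ℝ)
    (Ka Ka' Kq a₀ : ℝ) (ha₀ : 0 < a₀)
    (hainf : ∀ t ∈ Icc (0 : ℝ) T, a₀ ≤ a t)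
    (haK : ∀ t ∈ Icc (0 : ℝ) T, |a t| ≤ Ka)
    (haK' : ∀ t ∈ Icc (0 : ℝ) T, |a' t| ≤ Ka')
    (hqK : ∀ t ∈ Icc (0 : ℝ) T, |q t| ≤ Kq)
    (hader : ∀ t ∈ Icc (0 : ℝ) T, HasDerivAt a (a' t) t)
    (lam : ℝ) (hlam : 0 ≤ lam)
    (u u' u'' fhat : ℝ → ℂ)
    (hu' : ∀ t ∈ Icc (0 : ℝ) T, HasDerivAt u (u' t) t)
    (hu'' : ∀ t ∈ Icc (0 : ℝ) T, HasDerivAt u' (u'' t) t)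
    (hf : IntervalIntegrable (fun τ => ‖fhat τ‖ ^ 2) MeasureTheory.volume 0 T)
    (hode : ∀ t ∈ Icc (0 : ℝ) T,
      u'' t + ((a t * lam : ℝ) : ℂ) * u t + ((q t : ℝ) : ℂ) * u t = fhat t) :
    ∀ t ∈ Icc (0 : ℝ) T,
      (1 + lam) * ‖u t‖ ^ 2 + ‖u' t‖ ^ 2 ≤
        ((min a₀ 1)⁻¹ * (1 + Ka) *
            Real.exp ((min a₀ 1)⁻¹ * (1 + Ka' + Kq + 2 * Ka) * T)) *
          ((1 + lam) * ‖u 0‖ ^ 2 + ‖u' 0‖ ^ 2 +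
            ∫ τ in (0 : ℝ)..T, ‖fhat τ‖ ^ 2) :=
  stmt19_general T a a' q Ka Ka' Kq a₀ ha₀ hainf haK haK' hqK hader lam hlam u u' u'' fhat hu' hu''
    hf hode
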